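/- For all natural numbers n ≥ i ≥ 0, the number of v-steps at level i in all G-Motzkin paths of length n+1 equals the number of d-steps at level i in all G-Motzkin paths of length n+2. -/
import Mathlib


/-- Steps of a G-Motzkin path: up `(1,1)`, down `(1,-1)`, horizontal `(1,0)`,
vertical `(0,-1)`. -/
inductive GStep : Type
  | u | d | h | v
deriving DecidableEq, Repr

/-- Horizontal displacement of a step. -/
def GStep.x : GStep → ℕ
  | .u => 1
  | .d => 1
  | .h => 1
  | .v => 0

/-- Vertical displacement of a step. -/
def GStep.y : GStep → ℤ
  | .u => 1
  | .d => -1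
  | .h => 0
  | .v => -1

/-- The height (ordinate) of the path after its first `k` steps. -/
def gHeight (p : List GStep) (k : ℕ) : ℤ :=
  ((p.take k).map GStep.y).sum

/-- A G-Motzkin path: it stays in the first quadrant (all intermediate heights
are nonnegative) and ends at height `0`. -/
def IsGMotzkin (p : List GStep) : Prop :=
  (∀ k ≤ p.length, 0 ≤ gHeight p k) ∧ gHeight p p.length = 0

/-- The length of a G-Motzkin path, i.e. the abscissa of its final point. -/
def gLength (p : List GStep) : ℕ :=
  (p.map GStep.x).sum

lemma gHeight_set (l : List GStep) (k m : ℕ) (a b : GStep) (hy : GStep.y a = GStep.y b)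
    (h : l[k]? = some a) :
    gHeight (l.set k b) m = gHeight l m := by
  unfold gHeight
  induction l generalizing k m with
  | nil => simp at h
  | cons c t ih =>
    cases k with
    | zero =>
      simp at h; subst h
      cases m with
      | zero => simp
      | succ m => simp [List.take_succ_cons, hy]
    | succ k =>
      cases m with
      | zero => simp
      | succ m => simp only [List.set_cons_succ, List.take_succ_cons, List.map_cons,
          List.sum_cons]; rw [ih k m (by simpa using h)]

lemma set_self (l : List GStep) (k : ℕ) (a : GStep) (h : l[k]? = some a) :
    l.set k a = l := by
  induction l generalizing k with
  | nil => simp at h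
  | cons c t ih =>
    cases k with
    | zero => simp at h; simp [h]
    | succ k => simp only [List.set_cons_succ]; rw [ih k (by simpa using h)]

lemma getElem?_set' (l : List GStep) (k : ℕ) (a b : GStep) (h : l[k]? = some a) :
    (l.set k b)[k]? = some b := by
  induction l generalizing k with
  | nil => simp at h
  | cons c t ih =>
    cases k with
    | zero => simp
    | succ k => simpa using ih k (by simpa using h)

lemma gLength_set (l : List GStep) (k : ℕ) (a b : GStep) (h : l[k]? = some a) :
    gLength (l.set k b) + GStep.x a = gLength l + GStep.x b := by
  unfold gLength
  induction l generalizing k with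
  | nil => simp at h
  | cons c t ih =>
    cases k with
    | zero => simp at h; subst h; simp; ring
    | succ k =>
      simp only [List.set_cons_succ, List.map_cons, List.sum_cons]
      have := ih k (by simpa using h)
      omega

lemma isGMotzkin_set (l : List GStep) (k : ℕ) (a b : GStep) (hy : GStep.y a = GStep.y b)
    (h : l[k]? = some a) (hl : IsGMotzkin l) : IsGMotzkin (l.set k b) := by
  obtain ⟨h1, h2⟩ := hl
  constructor
  · intro m hm
    rw [gHeight_set l k m a b hy h]
    exact h1 m (by simpa using hm)
  · rw [List.length_set, gHeight_set l k _ a b hy h]; exact h2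

/-- For all `n ≥ i ≥ 0`: the number of v-steps at level `i` in all G-Motzkin
paths of length `n+1` equals the number of d-steps at level `i` in all
G-Motzkin paths of length `n+2`. A step (the `k`-th step of a path) is at
level `ℓ` if the ordinate of its endpoint is `ℓ`; steps are counted as pairs
(path, index of the step). -/
theorem vSteps_length_succ_eq_dSteps_length_two_add (n i : ℕ) (hin : i ≤ n) :
    Set.ncard {pk : List GStep × ℕ |
        IsGMotzkin pk.1 ∧ gLength pk.1 = n + 1 ∧
        pk.1[pk.2]? = some GStep.v ∧ gHeight pk.1 (pk.2 + 1) = (i : ℤ)} =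
    Set.ncard {pk : List GStep × ℕ |
        IsGMotzkin pk.1 ∧ gLength pk.1 = n + 2 ∧
        pk.1[pk.2]? = some GStep.d ∧ gHeight pk.1 (pk.2 + 1) = (i : ℤ)} := by
  set S := {pk : List GStep × ℕ |
        IsGMotzkin pk.1 ∧ gLength pk.1 = n + 1 ∧
        pk.1[pk.2]? = some GStep.v ∧ gHeight pk.1 (pk.2 + 1) = (i : ℤ)} with hS
  set T := {pk : List GStep × ℕ |
        IsGMotzkin pk.1 ∧ gLength pk.1 = n + 2 ∧
        pk.1[pk.2]? = some GStep.d ∧ gHeight pk.1 (pk.2 + 1) = (i : ℤ)} with hT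
  set f : List GStep × ℕ → List GStep × ℕ := fun pk => (pk.1.set pk.2 GStep.d, pk.2) with hf
  have himg : T = f '' S := by
    ext ⟨q, k⟩
    simp only [hS, hT, hf, Set.mem_setOf_eq, Set.mem_image, Prod.exists, Prod.mk.injEq]
    constructor
    · rintro ⟨hM, hL, hE, hH⟩
      refine ⟨q.set k GStep.v, k, ⟨?_, ?_, ?_, ?_⟩, ?_, rfl⟩
      · exact isGMotzkin_set q k GStep.d GStep.v rfl hE hM
      · have := gLength_set q k GStep.d GStep.v hE
        simp [GStep.x] at this; omega
      · exact getElem?_set' q k GStep.d GStep.v hE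
      · rw [gHeight_set q k (k+1) GStep.d GStep.v rfl hE]; exact hH
      · rw [List.set_set, set_self q k GStep.d hE]
    · rintro ⟨p, k', ⟨hM, hL, hE, hH⟩, hq, hk⟩
      subst hk; subst hq
      refine ⟨?_, ?_, ?_, ?_⟩
      · exact isGMotzkin_set p k' GStep.v GStep.d rfl hE hM
      · have := gLength_set p k' GStep.v GStep.d hE
        simp [GStep.x] at this; omega
      · exact getElem?_set' p k' GStep.v GStep.d hE
      · rw [gHeight_set p k' (k'+1) GStep.v GStep.d rfl hE]; exact hH
  have hinj : Set.InjOn f S := by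
    rintro ⟨p, k⟩ ⟨hp, _, hpE, _⟩ ⟨q, k'⟩ ⟨hq, _, hqE, _⟩ heq
    simp only [hf, Prod.mk.injEq] at heq
    obtain ⟨h1, h2⟩ := heq
    subst h2
    have : p = q := by
      calc p = (p.set k GStep.d).set k GStep.v := by
              rw [List.set_set, set_self p k GStep.v hpE]
        _ = (q.set k GStep.d).set k GStep.v := by rw [h1]
        _ = q := by rw [List.set_set, set_self q k GStep.v hqE]
    simp [this]
  rw [himg, Set.ncard_image_of_injOn hinj]
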